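/- Let V be a real inner product space of dimension ≥ 2, and let Σ ⊆ S(V) be a nonempty open subset of the unit sphere of V. Suppose A : V → W is a linear map to another inner product space W such that ‖A v‖ is the same constant λ for all v ∈ Σ. Then ‖A v‖ = λ ‖v‖ for all v ∈ V, i.e., A is a λ-homothety, and hence A preserves angles: ⟨Av₁, Av₂⟩ = λ² ⟨v₁, v₂⟩ for all v₁, v₂ ∈ V. -/
import Mathlib


open scoped RealInnerProductSpace

/-- A linear map whose image norm is constant `l` on a nonempty open subset of the unit
sphere of a space of dimension ≥ 2 is an `l`-homothety, and hence preserves inner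
products up to the factor `l²`. -/
theorem stmt9 {V W : Type*} [NormedAddCommGroup V] [InnerProductSpace ℝ V]
    [NormedAddCommGroup W] [InnerProductSpace ℝ W]
    (hdim : 2 ≤ Module.rank ℝ V)
    (S : Set V) (hSsub : S ⊆ Metric.sphere (0:V) 1) (hSne : S.Nonempty)
    (hSopen : IsOpen ((↑·) ⁻¹' S : Set (Metric.sphere (0:V) 1)))
    (A : V →ₗ[ℝ] W) (l : ℝ) (hl : ∀ v ∈ S, ‖A v‖ = l) :
    (∀ v : V, ‖A v‖ = l * ‖v‖) ∧
    (∀ v₁ v₂ : V, ⟪A v₁, A v₂⟫ = l ^ 2 * ⟪v₁, v₂⟫) := by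
  obtain ⟨x₀, hx₀S⟩ := hSne
  have hx₀n : ‖x₀‖ = 1 := by
    have := hSsub hx₀S; rwa [Metric.mem_sphere, dist_zero_right] at this
  have hlnn : 0 ≤ l := (hl x₀ hx₀S) ▸ norm_nonneg _
  -- extract an open set U of V cutting out S on the sphere
  obtain ⟨U, hUopen, hUS⟩ := isOpen_induced_iff.mp hSopen
  have hmemU : ∀ x : V, ‖x‖ = 1 → (x ∈ U ↔ x ∈ S) := by
    intro x hx
    have hxs : x ∈ Metric.sphere (0:V) 1 := by
      rwa [Metric.mem_sphere, dist_zero_right]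
    constructor
    · intro h
      have : (⟨x, hxs⟩ : Metric.sphere (0:V) 1) ∈ ((↑·) ⁻¹' U : Set (Metric.sphere (0:V) 1)) := h
      rw [hUS] at this; exact this
    · intro h
      have : (⟨x, hxs⟩ : Metric.sphere (0:V) 1) ∈ ((↑·) ⁻¹' S : Set (Metric.sphere (0:V) 1)) := h
      rw [← hUS] at this; exact this
  -- the open cone over S
  set C : Set V := {(0:V)}ᶜ ∩ (fun x : V => ‖x‖⁻¹ • x) ⁻¹' U with hC
  have hcont : ContinuousOn (fun x : V => ‖x‖⁻¹ • x) {(0:V)}ᶜ := by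
    apply ContinuousOn.smul
    · exact (continuous_norm.continuousOn).inv₀
        (fun x hx => norm_ne_zero_iff.mpr (by simpa using hx))
    · exact continuousOn_id
  have hCopen : IsOpen C :=
    hcont.isOpen_inter_preimage isOpen_compl_singleton hUopen
  have hCnorm : ∀ x ∈ C, ‖A x‖ = l * ‖x‖ := by
    rintro x ⟨hx0, hxU⟩
    have hx0' : x ≠ 0 := by simpa using hx0
    have hnx : ‖x‖ ≠ 0 := norm_ne_zero_iff.mpr hx0'
    have hun : ‖‖x‖⁻¹ • x‖ = 1 := by
      rw [norm_smul, norm_inv, norm_norm, inv_mul_cancel₀ hnx]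
    have huS : (‖x‖⁻¹ • x) ∈ S := (hmemU _ hun).mp hxU
    have hAu : ‖A (‖x‖⁻¹ • x)‖ = l := hl _ huS
    have hxu : x = ‖x‖ • (‖x‖⁻¹ • x) := by
      rw [smul_smul, mul_inv_cancel₀ hnx, one_smul]
    calc ‖A x‖ = ‖A (‖x‖ • (‖x‖⁻¹ • x))‖ := by rw [← hxu]
      _ = ‖x‖ * ‖A (‖x‖⁻¹ • x)‖ := by
          rw [map_smul, norm_smul, Real.norm_eq_abs, abs_of_nonneg (norm_nonneg x)]
      _ = l * ‖x‖ := by rw [hAu]; ring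
  have hx₀C : x₀ ∈ C := by
    constructor
    · simp only [Set.mem_compl_iff, Set.mem_singleton_iff]
      intro h; rw [h] at hx₀n; simp at hx₀n
    · show (‖x₀‖⁻¹ • x₀) ∈ U
      rw [hx₀n, inv_one, one_smul]
      exact (hmemU _ hx₀n).mpr hx₀S
  obtain ⟨ε, hε, hball⟩ := Metric.isOpen_iff.mp hCopen x₀ hx₀C
  have hAx₀ : ‖A x₀‖ = l := hl x₀ hx₀S
  -- key quadratic identity
  have key : ∀ y : V, ‖A y‖ ^ 2 = l ^ 2 * ‖y‖ ^ 2 := by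
    intro y
    set t : ℝ := ε / (2 * (‖y‖ + 1)) with ht_def
    have hy1 : (0:ℝ) < ‖y‖ + 1 := by positivity
    have ht : 0 < t := by positivity
    have htny : t * ‖y‖ < ε := by
      rw [ht_def, div_mul_eq_mul_div, div_lt_iff₀ (by positivity)]
      nlinarith [norm_nonneg y]
    have hmem : ∀ s : V, ‖s‖ = t * ‖y‖ → x₀ + s ∈ C := by
      intro s hs
      apply hball
      rw [Metric.mem_ball, dist_eq_norm, add_sub_cancel_left, hs]
      exact htny
    have h1 : x₀ + t • y ∈ C := hmem _ (by rw [norm_smul, Real.norm_eq_abs, abs_of_pos ht])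
    have h2 : x₀ + (-(t • y)) ∈ C := hmem _ (by rw [norm_neg, norm_smul, Real.norm_eq_abs, abs_of_pos ht])
    have e1 : ‖A x₀ + t • A y‖ = l * ‖x₀ + t • y‖ := by
      have := hCnorm _ h1
      rwa [map_add, map_smul] at this
    have e2 : ‖A x₀ - t • A y‖ = l * ‖x₀ - t • y‖ := by
      have := hCnorm _ h2
      rw [map_add, map_neg, map_smul] at this
      rwa [← sub_eq_add_neg, ← sub_eq_add_neg] at this
    have q1 : ‖A x₀ + t • A y‖ ^ 2 = l ^ 2 * ‖x₀ + t • y‖ ^ 2 := by rw [e1]; ring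
    have q2 : ‖A x₀ - t • A y‖ ^ 2 = l ^ 2 * ‖x₀ - t • y‖ ^ 2 := by rw [e2]; ring
    have pW : ‖A x₀ + t • A y‖ ^ 2 + ‖A x₀ - t • A y‖ ^ 2
        = 2 * ‖A x₀‖ ^ 2 + 2 * (t ^ 2 * ‖A y‖ ^ 2) := by
      have a1 := norm_add_sq_real (A x₀) (t • A y)
      have a2 := norm_sub_sq_real (A x₀) (t • A y)
      have hn : ‖t • A y‖ = t * ‖A y‖ := by
        rw [norm_smul, Real.norm_eq_abs, abs_of_pos ht]
      rw [hn] at a1 a2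
      linarith [a1, a2]
    have pV : l ^ 2 * ‖x₀ + t • y‖ ^ 2 + l ^ 2 * ‖x₀ - t • y‖ ^ 2
        = 2 * l ^ 2 + 2 * (l ^ 2 * (t ^ 2 * ‖y‖ ^ 2)) := by
      have a1 := norm_add_sq_real x₀ (t • y)
      have a2 := norm_sub_sq_real x₀ (t • y)
      have hn : ‖t • y‖ = t * ‖y‖ := by
        rw [norm_smul, Real.norm_eq_abs, abs_of_pos ht]
      rw [hn, hx₀n] at a1 a2
      linear_combination (l ^ 2) * a1 + (l ^ 2) * a2
    have main : t ^ 2 * ‖A y‖ ^ 2 = t ^ 2 * (l ^ 2 * ‖y‖ ^ 2) := by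
      rw [hAx₀] at pW
      linarith [q1, q2, pW, pV]
    have := mul_left_cancel₀ (pow_ne_zero 2 ht.ne') main
    linarith [this]
  have hnorm : ∀ v : V, ‖A v‖ = l * ‖v‖ := by
    intro v
    have h : ‖A v‖ ^ 2 = (l * ‖v‖) ^ 2 := by rw [key v]; ring
    have h1 : 0 ≤ ‖A v‖ := norm_nonneg _
    have h2 : 0 ≤ l * ‖v‖ := mul_nonneg hlnn (norm_nonneg _)
    nlinarith [h, h1, h2]
  refine ⟨hnorm, ?_⟩
  intro v₁ v₂
  have p1 := norm_add_sq_real (A v₁) (A v₂)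
  have p2 : l ^ 2 * ‖v₁ + v₂‖ ^ 2
      = l ^ 2 * ‖v₁‖ ^ 2 + 2 * (l ^ 2 * ⟪v₁, v₂⟫) + l ^ 2 * ‖v₂‖ ^ 2 := by
    rw [norm_add_sq_real]; ring
  have hq : ‖A v₁ + A v₂‖ ^ 2 = l ^ 2 * ‖v₁ + v₂‖ ^ 2 := by
    have := key (v₁ + v₂); rwa [map_add] at this
  linarith [p1, p2, hq, key v₁, key v₂]
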